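/- Let A be an m×m real matrix. If there exists a sequence x_n ∈ Im(A) with ‖x_n‖ → ∞ and x_n + A(x_n^3) → 0, then F_A(x) = x + (Ax)^3 is non-proper and 0 ∈ S_{F_A}. -/

import Mathlib

/-!
Lift `x n + A (x n ^ 3) → 0`, which lies in the range of `A`, to preimages `v n → 0` through a
continuous right inverse of `A` on its range. Then `z n = v n - x n ^ 3` satisfies `A z n = x n`,
so `F_A (z n) = v n → 0`, while `‖z n‖ ≥ ‖x n ^ 3‖ - ‖v n‖ → ∞` because `‖x n‖ → ∞`.
-/

open Filter Matrix Topology Bornology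

theorem abs_le_one_add_abs_pow_three (t : ℝ) : |t| ≤ 1 + |t| ^ 3 := by
  nlinarith [abs_nonneg t, mul_nonneg (abs_nonneg t) (sq_nonneg (|t| - 1))]

theorem norm_le_one_add_norm_cube {ι : Type*} [Fintype ι] (x : ι → ℝ) :
    ‖x‖ ≤ 1 + ‖fun i => x i ^ 3‖ := by
  refine (pi_norm_le_iff_of_nonneg (by positivity)).2 fun i => ?_
  calc ‖x i‖ ≤ 1 + ‖x i ^ 3‖ := by
        simpa only [Real.norm_eq_abs, abs_pow] using abs_le_one_add_abs_pow_three (x i)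
    _ ≤ 1 + ‖fun i => x i ^ 3‖ := by
        gcongr
        exact norm_le_pi_norm (fun i => x i ^ 3) i

theorem tendsto_norm_sub_atTop {α E : Type*} [SeminormedAddCommGroup E] {l : Filter α}
    {a b : α → E} (ha : Tendsto (‖a ·‖) l atTop) (hb : Tendsto b l (𝓝 0)) :
    Tendsto (fun n => ‖b n - a n‖) l atTop := by
  have hb' : Tendsto (fun n => -‖b n‖) l (𝓝 0) := by simpa using hb.norm.neg
  refine tendsto_atTop_mono (fun n => ?_) (ha.atTop_add hb')
  rw [← sub_eq_add_neg, norm_sub_rev]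
  exact norm_sub_norm_le (a n) (b n)

theorem LinearMap.exists_tendsto_zero_of_mem_range {𝕜 E F ι : Type*}
    [NontriviallyNormedField 𝕜] [CompleteSpace 𝕜]
    [NormedAddCommGroup E] [NormedSpace 𝕜 E] [FiniteDimensional 𝕜 E]
    [NormedAddCommGroup F] [NormedSpace 𝕜 F]
    (L : E →ₗ[𝕜] F) {l : Filter ι} {b : ι → F} (hb : ∀ i, b i ∈ L.range)
    (hb0 : Tendsto b l (𝓝 0)) :
    ∃ v : ι → E, (∀ i, L (v i) = b i) ∧ Tendsto v l (𝓝 0) := by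
  obtain ⟨B, hB⟩ := L.rangeRestrict.exists_rightInverse_of_surjective L.range_rangeRestrict
  refine ⟨fun i => B ⟨b i, hb i⟩, fun i => congrArg Subtype.val (LinearMap.ext_iff.1 hB _), ?_⟩
  have hb0' : Tendsto (fun i => (⟨b i, hb i⟩ : L.range)) l (𝓝 0) := tendsto_subtype_rng.2 hb0
  have hB0 := (B.continuous_of_finiteDimensional.tendsto 0).comp hb0'
  rwa [map_zero] at hB0

theorem not_forall_isCompact_preimage_of_tendsto {α X Y : Type*} [PseudoMetricSpace X]
    [TopologicalSpace Y] [WeaklyLocallyCompactSpace Y] {l : Filter α} [l.NeBot]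
    {f : X → Y} {z : α → X} {y : Y}
    (hz : Tendsto z l (cobounded X)) (hfz : Tendsto (f ∘ z) l (𝓝 y)) :
    ¬ ∀ K : Set Y, IsCompact K → IsCompact (f ⁻¹' K) := by
  intro hproper
  obtain ⟨K, hK, hKy⟩ := exists_compact_mem_nhds y
  have h_in : ∀ᶠ n in l, z n ∈ f ⁻¹' K := hfz hKy
  have h_out : ∀ᶠ n in l, z n ∈ (f ⁻¹' K)ᶜ := hz (hproper K hK).isBounded
  obtain ⟨n, hin, hout⟩ := (h_in.and h_out).exists
  exact hout hin

theorem sub_cube_add_cube_mulVec {ι : Type*} [Fintype ι] (A : Matrix ι ι ℝ) {x v : ι → ℝ}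
    (hv : A *ᵥ v = x + A *ᵥ fun i => x i ^ 3) :
    ((v - fun i => x i ^ 3) + fun i => (A *ᵥ (v - fun i => x i ^ 3)) i ^ 3) = v := by
  rw [mulVec_sub, hv, add_sub_cancel_right]
  exact sub_add_cancel v _

theorem stmt16 {m : ℕ} (A : Matrix (Fin m) (Fin m) ℝ)
    (hseq : ∃ x : ℕ → Fin m → ℝ,
      (∀ n, x n ∈ LinearMap.range A.mulVecLin) ∧
      Tendsto (fun n => ‖x n‖) atTop atTop ∧
      Tendsto (fun n => x n + A.mulVec (fun i => (x n i) ^ 3)) atTop (nhds 0)) :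
    (¬ ∀ K : Set (Fin m → ℝ), IsCompact K →
        IsCompact ((fun x => x + fun i => (A.mulVec x i) ^ 3) ⁻¹' K)) ∧
    ∃ y : ℕ → Fin m → ℝ,
      Tendsto (fun n => ‖y n‖) atTop atTop ∧
      Tendsto (fun n => y n + fun i => (A.mulVec (y n) i) ^ 3) atTop (nhds 0) := by
  obtain ⟨x, hx_range, hx_norm, hx_lim⟩ := hseq
  obtain ⟨v, hAv, hv⟩ := A.mulVecLin.exists_tendsto_zero_of_mem_range
    (fun n => add_mem (hx_range n) ⟨_, rfl⟩) hx_lim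
  set z : ℕ → Fin m → ℝ := fun n => v n - fun i => x n i ^ 3
  have hFz : ∀ n, (z n + fun i => (A *ᵥ z n) i ^ 3) = v n :=
    fun n => sub_cube_add_cube_mulVec A (hAv n)
  have hz_norm : Tendsto (‖z ·‖) atTop atTop := by
    have hcube : Tendsto (fun n => ‖fun i => x n i ^ 3‖) atTop atTop :=
      tendsto_atTop_mono (fun n => by linarith [norm_le_one_add_norm_cube (x n)])
        (tendsto_atTop_add_const_right _ (-1) hx_norm)
    exact tendsto_norm_sub_atTop hcube hv
  have hFz_lim : Tendsto (fun n => z n + fun i => (A *ᵥ z n) i ^ 3) atTop (𝓝 0) := by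
    simpa only [hFz] using hv
  exact ⟨not_forall_isCompact_preimage_of_tendsto (tendsto_norm_atTop_iff_cobounded.1 hz_norm)
    hFz_lim, z, hz_norm, hFz_lim⟩
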